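/- Let (J, 𝒜) be a standard Borel space, let ψ be a finite nonnegative Borel measure on J × J, and let σ, τ be finite nonnegative Borel measures on J with σ(J) = τ(J). There exists a σ-τ flow φ with φ ≤ ψ if and only if ψ(S × Sᶜ) ≥ σ(S) − τ(S) for every Borel set S ⊆ J. -/

import Mathlib

/-!
Necessity: the part of a flow `φ ≤ ψ` leaving `S` through `S × Sᶜ` must cover the net supply
`σ(S) - τ(S)`.

Sufficiency: the finitely additive set functions between `0` and `ψ` form a compact convex set `K`
in the product topology; each of them is a measure, since domination by the finite measure `ψ`
forces σ-additivity. The net-flow map `g ↦ (A ↦ g(A × J) - g(J × A))` sends `K` onto a compact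
convex set `D`. If `σ - τ ∉ D`, Hahn–Banach on finitely many coordinates produces a simple
function `f` with `∫ f dφ¹ - ∫ f dφ² < ∫ f dσ - ∫ f dτ` for every `φ ≤ ψ`. But for
`φ = ψ|_{f(x) > f(y)}` the left side is `∫ (f(x) - f(y))⁺ dψ`, and integrating the cut condition
over the superlevel sets of `f` (layer cake) gives the reverse inequality.
-/

open MeasureTheory Set
open scoped ENNReal

section DominatedContents

variable {α : Type*} [MeasurableSpace α]

/-- Points of the product space indexed by measurable sets, so that Tychonoff's theorem applies. -/
def dominatedContents (ψ : Measure α) : Set ({s : Set α // MeasurableSet s} → ℝ) :=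
  {g | (∀ s, 0 ≤ g s) ∧ (∀ s, g s ≤ ψ.real s) ∧
    ∀ s t : {s : Set α // MeasurableSet s}, Disjoint s.1 t.1 → g ⟨s ∪ t, s.2.union t.2⟩ = g s + g t}

variable {ψ : Measure α}

theorem isCompact_dominatedContents : IsCompact (dominatedContents ψ) := by
  refine (isCompact_univ_pi fun s => isCompact_Icc (a := 0) (b := ψ.real s.1)).of_isClosed_subset
    ?_ fun g hg s _ => ⟨hg.1 s, hg.2.1 s⟩
  simp only [dominatedContents, ofPred_and, ofPred_forall]
  refine (isClosed_iInter fun s => isClosed_le continuous_const (continuous_apply s)).inter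
    ((isClosed_iInter fun s => isClosed_le (continuous_apply s) continuous_const).inter
    (isClosed_iInter fun s => isClosed_iInter fun t => isClosed_iInter fun _ => ?_))
  exact isClosed_eq (continuous_apply _) ((continuous_apply s).add (continuous_apply t))

theorem convex_dominatedContents : Convex ℝ (dominatedContents ψ) := by
  rintro g ⟨hg0, hgψ, hgadd⟩ h ⟨hh0, hhψ, hhadd⟩ a b ha hb hab
  refine ⟨fun s => ?_, fun s => ?_, fun s t hst => ?_⟩
  · have := hg0 s; have := hh0 s
    simp only [Pi.add_apply, Pi.smul_apply, smul_eq_mul]; positivity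
  · calc a * g s + b * h s ≤ a * ψ.real s.1 + b * ψ.real s.1 := by
          gcongr; exacts [hgψ s, hhψ s]
      _ = ψ.real s.1 := by rw [← add_mul, hab, one_mul]
  · simp only [Pi.add_apply, Pi.smul_apply, smul_eq_mul, hgadd s t hst, hhadd s t hst]; ring

theorem measureReal_mem_dominatedContents [IsFiniteMeasure ψ] {φ : Measure α} (hφ : φ ≤ ψ) :
    (fun s => φ.real s.1) ∈ dominatedContents ψ := by
  have := isFiniteMeasure_of_le ψ hφ
  exact ⟨fun s => measureReal_nonneg, fun s => ENNReal.toReal_mono (measure_ne_top ψ _) (hφ _),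
    fun s t hst => measureReal_union hst t.2⟩

theorem exists_measure_of_mem_dominatedContents [IsFiniteMeasure ψ]
    {g : {s : Set α // MeasurableSet s} → ℝ} (hg : g ∈ dominatedContents ψ) :
    ∃ φ ≤ ψ, g = fun s => φ.real s.1 := by
  classical
  obtain ⟨hg0, hgψ, hgadd⟩ := hg
  have hC : IsSetRing {s : Set α | MeasurableSet s} :=
    ⟨.empty, fun _ _ => .union, fun _ _ => .diff⟩
  let m : AddContent ℝ≥0∞ {s : Set α | MeasurableSet s} :=
    hC.addContent_of_union (fun s => if h : MeasurableSet s then ENNReal.ofReal (g ⟨s, h⟩) else 0)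
      (by rw [dif_pos .empty, le_antisymm (by simpa using hgψ ⟨∅, .empty⟩) (hg0 _),
        ENNReal.ofReal_zero])
      (fun {s t} (hs : MeasurableSet s) (ht : MeasurableSet t) hst => by
        rw [dif_pos (hs.union ht), dif_pos hs, dif_pos ht, hgadd ⟨s, hs⟩ ⟨t, ht⟩ hst]
        exact ENNReal.ofReal_add (hg0 _) (hg0 _))
  have hm : ∀ s : {s : Set α // MeasurableSet s}, m s = ENNReal.ofReal (g s) := fun s =>
    dif_pos s.2
  have hmψ : ∀ s (hs : MeasurableSet s), m s ≤ ψ s := fun s hs =>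
    (hm ⟨s, hs⟩).trans_le (ENNReal.ofReal_le_of_le_toReal (hgψ ⟨s, hs⟩))
  -- `m` is squeezed below the finite measure `ψ`, hence continuous at `∅`, hence σ-additive.
  have hm_iUnion := addContent_iUnion_eq_sum_of_tendsto_zero hC m
    (fun s hs => ne_top_of_le_ne_top (measure_ne_top ψ s) (hmψ s hs))
    (fun s hs hanti hempty => by
      have hψ := tendsto_measure_iInter_atTop (μ := ψ) (fun n => (hs n).nullMeasurableSet)
        hanti ⟨0, measure_ne_top ψ _⟩
      rw [hempty, measure_empty] at hψ
      exact tendsto_of_tendsto_of_tendsto_of_le_of_le tendsto_const_nhds hψ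
        (fun _ => bot_le) fun n => hmψ _ (hs n))
  refine ⟨Measure.ofMeasurable (fun s _ => m s) addContent_empty
    (fun f hf hd => hm_iUnion hf (MeasurableSet.iUnion hf) hd), Measure.le_iff.2 fun s hs => ?_,
    funext fun s => ?_⟩
  · rw [Measure.ofMeasurable_apply s hs]; exact hmψ s hs
  · rw [measureReal_def, Measure.ofMeasurable_apply s.1 s.2, hm s, ENNReal.toReal_ofReal (hg0 s)]

end DominatedContents

theorem exists_finset_sum_mul_lt_of_notMem {ι : Type*} {D : Set (ι → ℝ)} (hDc : IsCompact D)
    (hDv : Convex ℝ D) {p : ι → ℝ} (hp : p ∉ D) :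
    ∃ (I : Finset ι) (c : I → ℝ), ∀ d ∈ D, ∑ i, c i * d i < ∑ i, c i * p i := by
  classical
  -- Membership in `D` is decided by finitely many coordinates, where Hahn–Banach applies.
  obtain ⟨I, u, hpu, hu⟩ := isOpen_pi_iff.1 hDc.isClosed.isOpen_compl p hp
  let r : (ι → ℝ) →L[ℝ] (I → ℝ) := ContinuousLinearMap.pi fun i => ContinuousLinearMap.proj i.1
  have hrp : r p ∉ r '' D := by
    rintro ⟨d, hd, hdp⟩
    refine hu (fun i hi => ?_) hd
    rw [show d i = p i from congrFun hdp ⟨i, hi⟩]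
    exact (hpu i hi).2
  obtain ⟨ℓ, v, hℓD, hℓp⟩ := geometric_hahn_banach_closed_point
    (hDv.linear_image r.toLinearMap) (hDc.image r.continuous).isClosed hrp
  have hℓ : ∀ x, ℓ (r x) = ∑ i, ℓ (fun j => if i = j then 1 else 0) * x i := fun x => by
    simpa [mul_comm, r] using (ℓ : (I → ℝ) →ₗ[ℝ] ℝ).pi_apply_eq_sum_univ (r x)
  refine ⟨I, fun i => ℓ (fun j => if i = j then 1 else 0), fun d hd => ?_⟩
  rw [← hℓ, ← hℓ]
  exact (hℓD _ ⟨d, hd, rfl⟩).trans hℓp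

section LayerCake

variable {J : Type*} [MeasurableSpace J]

theorem volume_restrict_Ioi_zero_Ico {a b : ℝ} (ha : 0 ≤ a) :
    volume.restrict (Ioi 0) (Ico a b) = ENNReal.ofReal (b - a) := by
  rw [Measure.restrict_congr_set Ioi_ae_eq_Ici, Measure.restrict_apply measurableSet_Ico,
    inter_eq_left.2 (Ico_subset_Ici_self.trans (Ici_subset_Ici.2 ha)), Real.volume_Ico]

theorem lintegral_measure_prod_compl_superlevel (ψ : Measure (J × J)) [SFinite ψ] {g : J → ℝ}
    (hg : Measurable g) (hg0 : 0 ≤ g) :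
    ∫⁻ t in Ioi 0, ψ ({x | t < g x} ×ˢ {x | t < g x}ᶜ) =
      ∫⁻ p, ENNReal.ofReal (g p.1 - g p.2) ∂ψ := by
  -- Both sides are the measure of `{(t, p) | g p.2 ≤ t < g p.1}`, computed slice by slice.
  set E : Set (ℝ × (J × J)) := {q | g q.2.2 ≤ q.1 ∧ q.1 < g q.2.1}
  have hE : MeasurableSet E :=
    (measurableSet_le (hg.comp (measurable_snd.comp measurable_snd)) measurable_fst).inter
      (measurableSet_lt measurable_fst (hg.comp (measurable_fst.comp measurable_snd)))
  calc ∫⁻ t in Ioi 0, ψ ({x | t < g x} ×ˢ {x | t < g x}ᶜ)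
      = ∫⁻ t in Ioi 0, ψ (Prod.mk t ⁻¹' E) := by
        congr! 3 with t
        ext p
        simp only [E, mem_prod, mem_ofPred_eq, mem_compl_iff, not_lt, mem_preimage]
        tauto
    _ = (volume.restrict (Ioi 0)).prod ψ E := (Measure.prod_apply hE).symm
    _ = ∫⁻ p, volume.restrict (Ioi 0) ((fun t => (t, p)) ⁻¹' E) ∂ψ := Measure.prod_apply_symm hE
    _ = ∫⁻ p, ENNReal.ofReal (g p.1 - g p.2) ∂ψ := lintegral_congr fun p => by
        rw [← volume_restrict_Ioi_zero_Ico (hg0 p.2)]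
        rfl

theorem lintegral_le_lintegral_add_of_cut {σ τ : Measure J} {ψ : Measure (J × J)} [SFinite ψ]
    (hcut : ∀ S, MeasurableSet S → σ S ≤ τ S + ψ (S ×ˢ Sᶜ)) {g : J → ℝ} (hg : Measurable g)
    (hg0 : 0 ≤ g) :
    ∫⁻ x, ENNReal.ofReal (g x) ∂σ ≤
      ∫⁻ x, ENNReal.ofReal (g x) ∂τ + ∫⁻ p, ENNReal.ofReal (g p.1 - g p.2) ∂ψ := by
  rw [lintegral_eq_lintegral_meas_lt σ (ae_of_all _ hg0) hg.aemeasurable,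
    lintegral_eq_lintegral_meas_lt τ (ae_of_all _ hg0) hg.aemeasurable,
    ← lintegral_measure_prod_compl_superlevel ψ hg hg0, ← lintegral_add_left]
  · exact lintegral_mono fun t => hcut _ (measurableSet_lt measurable_const hg)
  · exact Antitone.measurable fun s t hst => measure_mono fun x hx => hst.trans_lt hx

theorem integral_sub_integral_le_of_cut {σ τ : Measure J} {ψ : Measure (J × J)}
    [IsFiniteMeasure σ] [IsFiniteMeasure τ] [IsFiniteMeasure ψ] (hστ : σ univ = τ univ)
    (hcut : ∀ S, MeasurableSet S → σ S ≤ τ S + ψ (S ×ˢ Sᶜ)) {f : J → ℝ} (hf : Measurable f)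
    {C : ℝ} (hC : ∀ x, |f x| ≤ C) :
    ∫ x, f x ∂σ - ∫ x, f x ∂τ ≤ ∫ p, max (f p.1 - f p.2) 0 ∂ψ := by
  -- The shift by `C` makes `f` nonnegative and cancels because `σ` and `τ` have equal mass.
  set g : J → ℝ := fun x => f x + C
  have hg0 : 0 ≤ g := fun x => show 0 ≤ f x + C by linarith [neg_abs_le (f x), hC x]
  have hfint : ∀ (μ : Measure J) [IsFiniteMeasure μ], Integrable f μ := fun μ _ =>
    Integrable.of_bound hf.aestronglyMeasurable C (ae_of_all _ hC)
  have hgint : ∀ (μ : Measure J) [IsFiniteMeasure μ], Integrable g μ := fun μ _ =>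
    (hfint μ).add (integrable_const C)
  have hshift : ∀ (μ : Measure J) [IsFiniteMeasure μ],
      ∫ x, f x ∂μ = ∫ x, g x ∂μ - μ.real univ * C := fun μ _ => by
    rw [integral_add (hfint μ) (integrable_const C), integral_const, smul_eq_mul]
    ring
  have hmax0 : ∀ p : J × J, 0 ≤ max (f p.1 - f p.2) 0 := fun p => le_max_right _ _
  have hψ : ∫⁻ p, ENNReal.ofReal (g p.1 - g p.2) ∂ψ =
      ENNReal.ofReal (∫ p, max (f p.1 - f p.2) 0 ∂ψ) := by
    have hmax : Integrable (fun p : J × J => max (f p.1 - f p.2) 0) ψ := by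
      simpa [g] using ((hgint ψ.fst).comp_measurable measurable_fst |>.sub
        ((hgint ψ.snd).comp_measurable measurable_snd)).pos_part
    rw [ofReal_integral_eq_lintegral_ofReal hmax (ae_of_all _ hmax0)]
    simp [g]
  have key := lintegral_le_lintegral_add_of_cut hcut (hf.add_const C) hg0
  rw [← ofReal_integral_eq_lintegral_ofReal (hgint σ) (ae_of_all _ hg0),
    ← ofReal_integral_eq_lintegral_ofReal (hgint τ) (ae_of_all _ hg0), hψ,
    ← ENNReal.ofReal_add (integral_nonneg hg0) (integral_nonneg hmax0),
    ENNReal.ofReal_le_ofReal_iff (add_nonneg (integral_nonneg hg0) (integral_nonneg hmax0))] at key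
  rw [hshift σ, hshift τ, measureReal_def, measureReal_def, hστ]
  linarith

end LayerCake

theorem ENNReal.toReal_sub_toReal_le_toReal_iff {a b c : ℝ≥0∞} (ha : a ≠ ∞) (hb : b ≠ ∞)
    (hc : c ≠ ∞) : a.toReal - b.toReal ≤ c.toReal ↔ a ≤ b + c := by
  rw [sub_le_iff_le_add', ← ENNReal.toReal_add hb hc,
    ENNReal.toReal_le_toReal ha (ENNReal.add_ne_top.2 ⟨hb, hc⟩)]

theorem integral_sum_indicator_const {α ι : Type*} [MeasurableSpace α] [Fintype ι]
    (μ : Measure α) [IsFiniteMeasure μ] {A : ι → Set α} (hA : ∀ i, MeasurableSet (A i))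
    (c : ι → ℝ) :
    ∫ x, ∑ i, (A i).indicator (fun _ => c i) x ∂μ = ∑ i, c i * μ.real (A i) := by
  rw [integral_finsetSum _ fun i _ => (integrable_const (c i)).indicator (hA i)]
  simp only [integral_indicator_const _ (hA _), smul_eq_mul, mul_comm]

section Flows

variable {J : Type*} [MeasurableSpace J]

theorem measure_fst_le_measure_snd_add_prod_compl (φ : Measure (J × J)) {S : Set J}
    (hS : MeasurableSet S) : φ.fst S ≤ φ.snd S + φ (S ×ˢ Sᶜ) := by
  rw [Measure.fst_apply hS, Measure.snd_apply hS]
  refine (measure_mono fun p hp => ?_).trans (measure_union_le _ _)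
  by_cases h : p.2 ∈ S
  exacts [Or.inl h, Or.inr ⟨hp, h⟩]

theorem cut_of_flow {ψ φ : Measure (J × J)} {σ τ : Measure J} [IsFiniteMeasure φ]
    (hflow : φ.fst + τ = φ.snd + σ) (hφψ : φ ≤ ψ) {S : Set J} (hS : MeasurableSet S) :
    σ S ≤ τ S + ψ (S ×ˢ Sᶜ) := by
  have h := congrArg (· S) hflow
  simp only [Measure.add_apply] at h
  refine (ENNReal.add_le_add_iff_left (measure_ne_top φ.snd S)).1 ?_
  calc φ.snd S + σ S = φ.fst S + τ S := h.symm
    _ ≤ φ.snd S + φ (S ×ˢ Sᶜ) + τ S := by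
        gcongr; exact measure_fst_le_measure_snd_add_prod_compl φ hS
    _ ≤ φ.snd S + (τ S + ψ (S ×ˢ Sᶜ)) := by
        rw [add_assoc, add_comm (φ _)]; gcongr

def netFlow :
    ({s : Set (J × J) // MeasurableSet s} → ℝ) →L[ℝ] ({s : Set J // MeasurableSet s} → ℝ) :=
  ContinuousLinearMap.pi fun A =>
    ContinuousLinearMap.proj ⟨Prod.fst ⁻¹' A.1, measurable_fst A.2⟩ -
      ContinuousLinearMap.proj ⟨Prod.snd ⁻¹' A.1, measurable_snd A.2⟩

theorem netFlow_measureReal (φ : Measure (J × J)) (A : {s : Set J // MeasurableSet s}) :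
    netFlow (fun s => φ.real s.1) A = φ.fst.real A - φ.snd.real A := by
  simp [netFlow, measureReal_def, Measure.fst_apply A.2, Measure.snd_apply A.2]

theorem exists_le_integral_fst_sub_integral_snd {ψ : Measure (J × J)} {σ τ : Measure J}
    [IsFiniteMeasure σ] [IsFiniteMeasure τ] [IsFiniteMeasure ψ] (hστ : σ univ = τ univ)
    (hcut : ∀ S, MeasurableSet S → σ S ≤ τ S + ψ (S ×ˢ Sᶜ)) {f : J → ℝ} (hf : Measurable f)
    {C : ℝ} (hC : ∀ x, |f x| ≤ C) :
    ∃ φ ≤ ψ, ∫ x, f x ∂σ - ∫ x, f x ∂τ ≤ ∫ x, f x ∂φ.fst - ∫ x, f x ∂φ.snd := by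
  set W := {p : J × J | f p.2 < f p.1}
  have hW : MeasurableSet W := measurableSet_lt (hf.comp measurable_snd) (hf.comp measurable_fst)
  have hint : ∀ (μ : Measure J) [IsFiniteMeasure μ], Integrable f μ := fun μ _ =>
    Integrable.of_bound hf.aestronglyMeasurable C (ae_of_all _ hC)
  refine ⟨ψ.restrict W, Measure.restrict_le_self, ?_⟩
  have hmax : (fun p : J × J => max (f p.1 - f p.2) 0) = W.indicator fun p => f p.1 - f p.2 := by
    ext p
    by_cases hp : f p.2 < f p.1
    · simp [W, hp, hp.le]
    · simp [W, hp, not_lt.1 hp]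
  rw [Measure.fst, Measure.snd, integral_map measurable_fst.aemeasurable hf.aestronglyMeasurable,
    integral_map measurable_snd.aemeasurable hf.aestronglyMeasurable,
    ← integral_sub (f := fun p : J × J => f p.1) (g := fun p => f p.2)
      ((hint _).comp_measurable measurable_fst)
      ((hint _).comp_measurable measurable_snd), ← integral_indicator hW, ← hmax]
  exact integral_sub_integral_le_of_cut hστ hcut hf hC

theorem measureReal_sub_mem_image_netFlow {ψ : Measure (J × J)} {σ τ : Measure J}
    [IsFiniteMeasure σ] [IsFiniteMeasure τ] [IsFiniteMeasure ψ] (hστ : σ univ = τ univ)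
    (hcut : ∀ S, MeasurableSet S → σ S ≤ τ S + ψ (S ×ˢ Sᶜ)) :
    (fun A => σ.real A.1 - τ.real A.1) ∈ netFlow '' dominatedContents ψ := by
  by_contra hp
  obtain ⟨I, c, hc⟩ := exists_finset_sum_mul_lt_of_notMem
    (isCompact_dominatedContents.image netFlow.continuous)
    (convex_dominatedContents.linear_image netFlow.toLinearMap) hp
  set A : I → Set J := fun i => i.1.1
  have hA : ∀ i, MeasurableSet (A i) := fun i => i.1.2
  set f : J → ℝ := fun x => ∑ i, (A i).indicator (fun _ => c i) x
  have hf : Measurable f := Finset.measurable_sum _ fun i _ => measurable_const.indicator (hA i)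
  have hfC : ∀ x, |f x| ≤ ∑ i, |c i| := fun x =>
    (Finset.abs_sum_le_sum_abs _ _).trans (Finset.sum_le_sum fun i _ => by
      by_cases h : x ∈ A i <;> simp [h])
  have hdual : ∀ (μ ν : Measure J) [IsFiniteMeasure μ] [IsFiniteMeasure ν],
      ∫ x, f x ∂μ - ∫ x, f x ∂ν = ∑ i, c i * (μ.real (A i) - ν.real (A i)) := fun μ ν _ _ => by
    simp only [f, integral_sum_indicator_const _ hA, mul_sub, Finset.sum_sub_distrib]
  obtain ⟨φ, hφψ, hφ⟩ := exists_le_integral_fst_sub_integral_snd hστ hcut hf hfC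
  have := isFiniteMeasure_of_le ψ hφψ
  have hlt := hc _ ⟨_, measureReal_mem_dominatedContents hφψ, rfl⟩
  simp only [netFlow_measureReal] at hlt
  rw [hdual, hdual] at hφ
  exact hlt.not_ge hφ

theorem exists_flow_of_cut {ψ : Measure (J × J)} {σ τ : Measure J}
    [IsFiniteMeasure σ] [IsFiniteMeasure τ] [IsFiniteMeasure ψ] (hστ : σ univ = τ univ)
    (hcut : ∀ S, MeasurableSet S → σ S ≤ τ S + ψ (S ×ˢ Sᶜ)) :
    ∃ φ ≤ ψ, φ.fst + τ = φ.snd + σ := by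
  obtain ⟨g, hg, hgp⟩ := measureReal_sub_mem_image_netFlow hστ hcut
  obtain ⟨φ, hφψ, rfl⟩ := exists_measure_of_mem_dominatedContents hg
  have := isFiniteMeasure_of_le ψ hφψ
  refine ⟨φ, hφψ, Measure.ext fun A hA => ?_⟩
  have hA' := congrFun hgp ⟨A, hA⟩
  rw [netFlow_measureReal] at hA'
  rw [Measure.add_apply, Measure.add_apply,
    ← ENNReal.toReal_eq_toReal_iff' (by finiteness) (by finiteness),
    ENNReal.toReal_add (by finiteness) (by finiteness),
    ENNReal.toReal_add (by finiteness) (by finiteness)]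
  simp only [measureReal_def] at hA'
  linarith

end Flows

theorem stmt_6_general {J : Type*} [MeasurableSpace J]
    (ψ : Measure (J × J)) [IsFiniteMeasure ψ]
    (σ τ : Measure J) [IsFiniteMeasure σ] [IsFiniteMeasure τ]
    (hστ : σ univ = τ univ) :
    (∃ φ : Measure (J × J), IsFiniteMeasure φ ∧ φ.fst + τ = φ.snd + σ ∧ φ ≤ ψ) ↔
      (∀ S : Set J, MeasurableSet S →
        (σ S).toReal - (τ S).toReal ≤ (ψ (S ×ˢ Sᶜ)).toReal) := by
  have hcut_iff : ∀ S : Set J, (σ S).toReal - (τ S).toReal ≤ (ψ (S ×ˢ Sᶜ)).toReal ↔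
      σ S ≤ τ S + ψ (S ×ˢ Sᶜ) := fun S =>
    ENNReal.toReal_sub_toReal_le_toReal_iff (by finiteness) (by finiteness) (by finiteness)
  simp only [hcut_iff]
  constructor
  · rintro ⟨φ, _, hflow, hφψ⟩ S hS
    exact cut_of_flow hflow hφψ hS
  · intro h
    obtain ⟨φ, hφψ, hflow⟩ := exists_flow_of_cut hστ h
    exact ⟨φ, isFiniteMeasure_of_le ψ hφψ, hflow, hφψ⟩

/-- **Supply-Demand Theorem for measures.** Given a finite capacity measure `ψ` on `J × J`
and finite nonnegative measures `σ, τ` on `J` with `σ(J) = τ(J)`, there is a feasible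
`σ`-`τ` flow (a finite nonnegative measure `φ ≤ ψ` with `φ¹ - φ² = σ - τ`) iff
`ψ(S × Sᶜ) ≥ σ(S) - τ(S)` for every Borel set `S`. -/
theorem stmt_6 {J : Type*} [MeasurableSpace J] [StandardBorelSpace J]
    (ψ : Measure (J × J)) [IsFiniteMeasure ψ]
    (σ τ : Measure J) [IsFiniteMeasure σ] [IsFiniteMeasure τ]
    (hστ : σ univ = τ univ) :
    (∃ φ : Measure (J × J), IsFiniteMeasure φ ∧ φ.fst + τ = φ.snd + σ ∧ φ ≤ ψ) ↔
      (∀ S : Set J, MeasurableSet S →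
        (σ S).toReal - (τ S).toReal ≤ (ψ (S ×ˢ Sᶜ)).toReal) :=
  stmt_6_general ψ σ τ hστ
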